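/- Let 0 < q < 1, 0 < p < 1, N ∈ ℕ. The q-Kravchuk moments u_k^q = ∑_{s=0}^{N} [s]_q^(k) ρ(s)(x(s+1/2)-x(s-1/2)) with ρ(s) = q^{s(N-1)/2 - binom(N,2)/2} [N]_q!/([s]_q! [N-s]_q!) p^s (1-p)^{N-s} satisfy u_k^q = u_0^q · (q^{-N};q)_k / [(1-q)^k ((pq/(p-1));q)_k] · (p q^{N+1}/(p-1))^k, where u_0^q = (1-p)^N q^{-(binom(N,2)+1)/2} ((pq/(p-1));q)_N. -/

import Mathlib

/-- The lattice `x(s) = (q^s - 1)/(q - 1)`. -/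
noncomputable def qlat (q s : ℝ) : ℝ := (q ^ s - 1) / (q - 1)

/-- The q-falling factorial `[s]_q^(k) = ∏_{j=0}^{k-1} x(s - j)`. -/
noncomputable def qfall (q s : ℝ) (k : ℕ) : ℝ := ∏ j ∈ Finset.range k, qlat q (s - j)

/-- The q-Pochhammer symbol `(a;q)_k`. -/
noncomputable def qPoch (a q : ℝ) (k : ℕ) : ℝ := ∏ j ∈ Finset.range k, (1 - a * q ^ j)

/-- The symmetric q-number `[k]_q`. -/
noncomputable def qnum (q k : ℝ) : ℝ :=
  (q ^ (k / 2) - q ^ (-(k / 2))) / (q ^ ((1 : ℝ) / 2) - q ^ (-(1 : ℝ) / 2))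

/-- The symmetric q-factorial `[n]_q!`. -/
noncomputable def qfact (q : ℝ) (n : ℕ) : ℝ := ∏ k ∈ Finset.range n, qnum q (k + 1)

/-!
In ordinary q-numbers, `[n]_q! = q^(-n(n-1)/4) ∏_{i ≤ n} (1 + q + ⋯ + q^(i-1))`. Only the terms
with `s ≥ k` survive; for `s = k + t` and `N = k + M` the falling factorial `[s]_q^(k)` cancels
against `[s]_q!` and the term becomes a fixed multiple of
`[M choose t]_q q^(t(t-1)/2) (p q^(k+1))^t (1-p)^(M-t)`. By Rothe's q-binomial theorem these sum to
`∏_{j<M} (1 - p + p q^(k+1) q^j) = (1-p)^M (pq/(p-1); q)_N / (pq/(p-1); q)_k`, while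
`(q^(-N); q)_k = (q-1)^k q^(k(k-1)/2 - kN) [N]_q^(k)` supplies the remaining factor.
-/

open Finset

section QAnalogues

variable {R : Type*} [CommSemiring R] (q : R)

def qint (n : ℕ) : R := ∑ i ∈ range n, q ^ i

def qFactorial (n : ℕ) : R := ∏ i ∈ range n, qint q (i + 1)

def qDescFactorial (n k : ℕ) : R := ∏ j ∈ range k, qint q (n - j)

/-- The Gaussian binomial coefficient `[i + j choose i]_q`. -/
def qAddChoose : ℕ → ℕ → R
  | 0, _ => 1
  | _ + 1, 0 => 1
  | i + 1, j + 1 => qAddChoose i (j + 1) + q ^ (i + 1) * qAddChoose (i + 1) j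

@[simp] lemma qAddChoose_zero_left (j : ℕ) : qAddChoose q 0 j = 1 := by
  simp [qAddChoose]

@[simp] lemma qAddChoose_zero_right (i : ℕ) : qAddChoose q i 0 = 1 := by
  cases i <;> simp [qAddChoose]

lemma qAddChoose_succ_succ (i j : ℕ) :
    qAddChoose q (i + 1) (j + 1) =
      qAddChoose q i (j + 1) + q ^ (i + 1) * qAddChoose q (i + 1) j := by
  rw [qAddChoose]

lemma qint_add (m n : ℕ) : qint q (m + n) = qint q m + q ^ m * qint q n := by
  simp only [qint, sum_range_add, pow_add, mul_sum]

@[simp] lemma qFactorial_zero : qFactorial q 0 = 1 := prod_range_zero _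

lemma qFactorial_succ (n : ℕ) : qFactorial q (n + 1) = qFactorial q n * qint q (n + 1) :=
  prod_range_succ _ _

lemma qFactorial_mul_qDescFactorial (n k : ℕ) :
    qFactorial q n * qDescFactorial q (k + n) k = qFactorial q (k + n) := by
  induction k with
  | zero => simp [qDescFactorial]
  | succ k ih =>
    rw [qDescFactorial, prod_range_succ', add_right_comm, qFactorial_succ, ← ih, qDescFactorial]
    simp only [Nat.sub_zero, show ∀ j, k + n + 1 - (j + 1) = k + n - j by omega]
    ring

lemma qAddChoose_mul_qFactorial_mul_qFactorial (i j : ℕ) :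
    qAddChoose q i j * qFactorial q i * qFactorial q j = qFactorial q (i + j) := by
  induction i generalizing j with
  | zero => simp
  | succ i ih =>
    induction j with
    | zero => simp
    | succ j ihj =>
      have hi := ih (j + 1)
      rw [show i + (j + 1) = i + 1 + j by omega] at hi
      calc qAddChoose q (i + 1) (j + 1) * qFactorial q (i + 1) * qFactorial q (j + 1)
          = (qAddChoose q i (j + 1) * qFactorial q i * qFactorial q (j + 1)) * qint q (i + 1) +
              q ^ (i + 1) * (qAddChoose q (i + 1) j * qFactorial q (i + 1) * qFactorial q j) *
                qint q (j + 1) := by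
            rw [qAddChoose_succ_succ, qFactorial_succ q i, qFactorial_succ q j]; ring
        _ = qFactorial q (i + 1 + j) * qint q (i + 1 + j + 1) := by
            rw [hi, ihj, add_assoc (i + 1) j 1, qint_add q (i + 1) (j + 1)]; ring
        _ = qFactorial q (i + 1 + (j + 1)) := (qFactorial_succ q _).symm

lemma sum_antidiagonal_qAddChoose_succ_mul (f : ℕ → ℕ → R) (n : ℕ) :
    ∑ ij ∈ antidiagonal (n + 1), qAddChoose q ij.1 ij.2 * f ij.1 ij.2 =
      ∑ ij ∈ antidiagonal n, qAddChoose q ij.1 ij.2 * f (ij.1 + 1) ij.2 +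
        ∑ ij ∈ antidiagonal n, q ^ ij.1 * qAddChoose q ij.1 ij.2 * f ij.1 (ij.2 + 1) := by
  cases n with
  | zero => simp [Nat.sum_antidiagonal_succ, add_comm]
  | succ m =>
    rw [Nat.sum_antidiagonal_succ', Nat.sum_antidiagonal_succ, Nat.sum_antidiagonal_succ',
      Nat.sum_antidiagonal_succ]
    simp only [qAddChoose_zero_left, qAddChoose_zero_right, qAddChoose_succ_succ, add_mul,
      mul_assoc, sum_add_distrib, pow_zero, one_mul]
    ring

/-- Rothe's q-binomial theorem. -/
theorem prod_add_mul_pow_eq_sum_qAddChoose (a b : R) (n : ℕ) :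
    ∏ j ∈ range n, (a + b * q ^ j) =
      ∑ ij ∈ antidiagonal n,
        qAddChoose q ij.1 ij.2 * q ^ ij.1.choose 2 * b ^ ij.1 * a ^ ij.2 := by
  induction n generalizing b with
  | zero => simp
  | succ n ih =>
    have hsplit :=
      sum_antidiagonal_qAddChoose_succ_mul q (fun i j ↦ q ^ i.choose 2 * b ^ i * a ^ j) n
    simp only [← mul_assoc] at hsplit
    rw [hsplit, prod_range_succ']
    have hshift : ∀ j, a + b * q ^ (j + 1) = a + b * q * q ^ j := fun j ↦ by ring
    rw [prod_congr rfl fun j _ ↦ hshift j, ih (b * q), ← sum_add_distrib, sum_mul]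
    refine sum_congr rfl fun ij _ ↦ ?_
    rw [Nat.choose_succ_succ', Nat.choose_one_right]
    ring

end QAnalogues

section Real

variable {q : ℝ}

lemma qint_pos (hq : 0 < q) {n : ℕ} (hn : n ≠ 0) : 0 < qint q n :=
  sum_pos (fun i _ ↦ pow_pos hq i) (nonempty_range_iff.mpr hn)

lemma qFactorial_pos (hq : 0 < q) (n : ℕ) : 0 < qFactorial q n :=
  prod_pos fun i _ ↦ qint_pos hq i.succ_ne_zero

lemma qlat_natCast (hq1 : q ≠ 1) (n : ℕ) : qlat q n = qint q n := by
  rw [qlat, Real.rpow_natCast, qint, geom_sum_eq hq1]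

lemma qlat_add_half_sub_qlat_sub_half (hq : 0 < q) (hq1 : q ≠ 1) (s : ℝ) :
    qlat q (s + 1 / 2) - qlat q (s - 1 / 2) = q ^ (s - 1 / 2) := by
  have hshift : q ^ (s + 1 / 2) = q ^ (s - 1 / 2) * q := by
    rw [← Real.rpow_add_one hq.ne']; ring_nf
  rw [qlat, qlat, div_sub_div_same, hshift, sub_sub_sub_cancel_right, ← mul_sub_one,
    mul_div_cancel_right₀ _ (sub_ne_zero.mpr hq1)]

lemma qnum_eq_rpow_mul_qlat (hq : 0 < q) (x : ℝ) :
    qnum q x = q ^ (-(x - 1) / 2) * qlat q x := by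
  have hnum : q ^ (x / 2) - q ^ (-(x / 2)) = q ^ (-(x / 2)) * (q ^ x - 1) := by
    rw [mul_sub_one, ← Real.rpow_add hq]; ring_nf
  have hden : q ^ ((1 : ℝ) / 2) - q ^ (-(1 : ℝ) / 2) = q ^ (-(1 : ℝ) / 2) * (q - 1) := by
    rw [mul_sub_one, ← Real.rpow_add_one hq.ne']; ring_nf
  have hexp : q ^ (-(x / 2)) = q ^ (-(x - 1) / 2) * q ^ (-(1 : ℝ) / 2) := by
    rw [← Real.rpow_add hq]; ring_nf
  rw [qnum, hnum, hden, hexp, qlat, mul_div_mul_comm, mul_div_cancel_right₀ _ (by positivity)]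

lemma qfact_eq_rpow_mul_qFactorial (hq : 0 < q) (hq1 : q ≠ 1) (n : ℕ) :
    qfact q n = q ^ (-(n.choose 2 : ℝ) / 2) * qFactorial q n := by
  have hsum : ∑ i ∈ range n, (-((i : ℝ) + 1 - 1) / 2) = -(n.choose 2 : ℝ) / 2 := by
    simp only [add_sub_cancel_right]
    rw [← sum_div, sum_neg_distrib, ← Nat.cast_sum, sum_range_id, ← Nat.choose_two_right]
  rw [qfact, ← hsum, Real.rpow_sum_of_pos hq, qFactorial, ← prod_mul_distrib]
  refine prod_congr rfl fun i _ ↦ ?_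
  rw [qnum_eq_rpow_mul_qlat hq, ← Nat.cast_succ, qlat_natCast hq1, Nat.cast_succ]

lemma qfall_natCast_of_lt {n k : ℕ} (h : n < k) : qfall q n k = 0 :=
  prod_eq_zero (mem_range.mpr h) (by simp [qlat])

lemma qfall_natCast (hq1 : q ≠ 1) {n k : ℕ} (h : k ≤ n) :
    qfall q n k = qDescFactorial q n k :=
  prod_congr rfl fun j hj ↦ by
    rw [← Nat.cast_sub (by have := mem_range.mp hj; omega), qlat_natCast hq1]

lemma qPoch_add (a : ℝ) (m n : ℕ) :
    qPoch a q (m + n) = qPoch a q m * qPoch (a * q ^ m) q n := by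
  simp only [qPoch, prod_range_add, pow_add, mul_assoc]

lemma qPoch_pos {a : ℝ} (ha : a ≤ 0) (hq : 0 ≤ q) (n : ℕ) : 0 < qPoch a q n :=
  prod_pos fun j _ ↦ by linarith [mul_nonpos_of_nonpos_of_nonneg ha (pow_nonneg hq j)]

lemma qPoch_rpow_neg_natCast_of_lt (hq : 0 < q) {N k : ℕ} (h : N < k) :
    qPoch (q ^ (-(N : ℝ))) q k = 0 :=
  prod_eq_zero (mem_range.mpr h) (by rw [← Real.rpow_natCast, ← Real.rpow_add hq]; simp)

lemma qPoch_rpow_neg_natCast (hq : 0 < q) {N k : ℕ} (h : k ≤ N) :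
    qPoch (q ^ (-(N : ℝ))) q k =
      (q - 1) ^ k * q ^ ((k.choose 2 : ℝ) - k * N) * qDescFactorial q N k := by
  have hfactor : ∀ j ∈ range k,
      1 - q ^ (-(N : ℝ)) * q ^ j = (q - 1) * q ^ ((j : ℝ) - N) * qint q (N - j) := by
    intro j hj
    have hjN : j ≤ N := by have := mem_range.mp hj; omega
    have hinv : q ^ ((j : ℝ) - N) * q ^ (N - j) = 1 := by
      rw [← Real.rpow_natCast, ← Real.rpow_add hq, Nat.cast_sub hjN]; simp
    rw [← Real.rpow_natCast q j, ← Real.rpow_add hq, neg_add_eq_sub,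
      show (q - 1) * q ^ ((j : ℝ) - N) * qint q (N - j) =
        q ^ ((j : ℝ) - N) * (qint q (N - j) * (q - 1)) by ring,
      qint, geom_sum_mul, mul_sub_one, hinv]
  have hsum : ∑ j ∈ range k, ((j : ℝ) - N) = (k.choose 2 : ℝ) - k * N := by
    rw [sum_sub_distrib, ← Nat.cast_sum, sum_range_id, ← Nat.choose_two_right]; simp
  rw [qPoch, prod_congr rfl hfactor, prod_mul_distrib, prod_mul_distrib, prod_const, card_range,
    ← hsum, Real.rpow_sum_of_pos hq, qDescFactorial]

end Real

section Kravchuk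

variable {q : ℝ}

noncomputable def qKravchukWeight (q p : ℝ) (N s : ℕ) : ℝ :=
  q ^ ((s : ℝ) * ((N : ℝ) - 1) / 2 - (N.choose 2 : ℝ) / 2) *
    qfact q N / (qfact q s * qfact q (N - s)) * p ^ s * (1 - p) ^ (N - s)

lemma qKravchuk_moment_term (hq : 0 < q) (hq1 : q ≠ 1) (p : ℝ) (k t u : ℕ) :
    qfall q ((k + t : ℕ) : ℝ) k * qKravchukWeight q p (k + (t + u)) (k + t) *
        (qlat q (((k + t : ℕ) : ℝ) + 1 / 2) - qlat q (((k + t : ℕ) : ℝ) - 1 / 2)) =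
      q ^ (((k + 1).choose 2 : ℝ) - (((k + (t + u)).choose 2 : ℝ) + 1) / 2) * p ^ k *
          qDescFactorial q (k + (t + u)) k *
        (qAddChoose q t u * q ^ t.choose 2 * (p * q ^ (k + 1)) ^ t * (1 - p) ^ u) := by
  have hexp : q ^ (((k + t : ℕ) : ℝ) * (((k + (t + u) : ℕ) : ℝ) - 1) / 2 -
        ((k + (t + u)).choose 2 : ℝ) / 2) * q ^ (-((k + (t + u)).choose 2 : ℝ) / 2) *
        q ^ (((k + t : ℕ) : ℝ) - 1 / 2) =
      q ^ (((k + 1).choose 2 : ℝ) - (((k + (t + u)).choose 2 : ℝ) + 1) / 2) *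
        q ^ t.choose 2 * (q ^ (k + 1)) ^ t *
        (q ^ (-((k + t).choose 2 : ℝ) / 2) * q ^ (-(u.choose 2 : ℝ) / 2)) := by
    rw [← pow_mul]
    simp only [← Real.rpow_natCast, ← Real.rpow_add hq]
    congr 1
    simp only [Nat.cast_choose_two]
    push_cast
    ring
  have hFN : qFactorial q (k + (t + u)) =
      qAddChoose q t u * qFactorial q t * qFactorial q u * qDescFactorial q (k + (t + u)) k := by
    rw [qAddChoose_mul_qFactorial_mul_qFactorial, qFactorial_mul_qDescFactorial]
  rw [qKravchukWeight, qfall_natCast hq1 (Nat.le_add_right k t),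
    qlat_add_half_sub_qlat_sub_half hq hq1, qfact_eq_rpow_mul_qFactorial hq hq1,
    qfact_eq_rpow_mul_qFactorial hq hq1, qfact_eq_rpow_mul_qFactorial hq hq1,
    show k + (t + u) - (k + t) = u by omega, hFN]
  field_simp [(qFactorial_pos hq (k + t)).ne', (qFactorial_pos hq u).ne'] at hexp ⊢
  rw [← qFactorial_mul_qDescFactorial q t k]
  linear_combination qAddChoose q t u * qDescFactorial q (k + (t + u)) k * (1 - p) ^ u * p ^ k *
    p ^ t * qFactorial q t * qDescFactorial q (k + t) k * hexp

lemma sum_qKravchuk_moment_eq_prod (hq : 0 < q) (hq1 : q ≠ 1) (p : ℝ) (k M : ℕ) :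
    ∑ s ∈ range (k + M + 1), qfall q s k * qKravchukWeight q p (k + M) s *
        (qlat q ((s : ℝ) + 1 / 2) - qlat q ((s : ℝ) - 1 / 2)) =
      q ^ (((k + 1).choose 2 : ℝ) - (((k + M).choose 2 : ℝ) + 1) / 2) * p ^ k *
        qDescFactorial q (k + M) k * ∏ j ∈ range M, (1 - p + p * q ^ (k + 1) * q ^ j) := by
  rw [add_assoc, sum_range_add, sum_eq_zero fun s hs ↦ by
      rw [qfall_natCast_of_lt (mem_range.mp hs), zero_mul, zero_mul],
    zero_add, prod_add_mul_pow_eq_sum_qAddChoose, Nat.sum_antidiagonal_eq_sum_range_succ_mk,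
    mul_sum]
  refine sum_congr rfl fun t ht ↦ ?_
  have hterm := qKravchuk_moment_term hq hq1 p k t (M - t)
  rwa [Nat.add_sub_cancel' (Nat.lt_succ_iff.mp (mem_range.mp ht))] at hterm

lemma qKravchuk_closed_form_eq_prod (hq : 0 < q) (hq1 : q ≠ 1) {p : ℝ} (hp : 0 < p)
    (hp1 : p < 1) (k M : ℕ) :
    ((1 - p) ^ (k + M) * q ^ (-(((k + M).choose 2 : ℝ) + 1) / 2) *
        qPoch (p * q / (p - 1)) q (k + M)) *
        qPoch (q ^ (-((k + M : ℕ) : ℝ))) q k / ((1 - q) ^ k * qPoch (p * q / (p - 1)) q k) *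
          (p * q ^ (k + M + 1) / (p - 1)) ^ k =
      q ^ (((k + 1).choose 2 : ℝ) - (((k + M).choose 2 : ℝ) + 1) / 2) * p ^ k *
        qDescFactorial q (k + M) k * ∏ j ∈ range M, (1 - p + p * q ^ (k + 1) * q ^ j) := by
  have hprod : (1 - p) ^ M * qPoch (p * q / (p - 1) * q ^ k) q M =
      ∏ j ∈ range M, (1 - p + p * q ^ (k + 1) * q ^ j) := by
    have hfactor : ∀ j : ℕ, (1 - p) * (1 - p * q / (p - 1) * q ^ k * q ^ j) =
        1 - p + p * q ^ (k + 1) * q ^ j := fun j ↦ by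
      field_simp [sub_ne_zero.mpr hp1.ne]
      ring
    rw [qPoch, ← prod_congr rfl fun j _ ↦ hfactor j, prod_mul_distrib, prod_const, card_range]
  have hsign : (q - 1) ^ k * (1 - p) ^ k = (1 - q) ^ k * (p - 1) ^ k := by
    rw [← mul_pow, ← mul_pow]; ring_nf
  have hexp : q ^ (-(((k + M).choose 2 : ℝ) + 1) / 2) *
        q ^ ((k.choose 2 : ℝ) - k * ((k + M : ℕ) : ℝ)) * (q ^ (k + M + 1)) ^ k =
      q ^ (((k + 1).choose 2 : ℝ) - (((k + M).choose 2 : ℝ) + 1) / 2) := by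
    rw [← pow_mul, ← Real.rpow_natCast, ← Real.rpow_add hq, ← Real.rpow_add hq]
    congr 1
    simp only [Nat.cast_choose_two]
    push_cast
    ring
  have hc : p * q / (p - 1) ≤ 0 := div_nonpos_of_nonneg_of_nonpos (by positivity) (by linarith)
  rw [qPoch_add, qPoch_rpow_neg_natCast hq (Nat.le_add_right k M), pow_add, ← hprod, ← hexp,
    div_pow, mul_pow]
  field_simp [sub_ne_zero.mpr hp1.ne, sub_ne_zero.mpr hq1.symm, (qPoch_pos hc hq.le k).ne']
  linear_combination (1 - p) ^ M * qPoch (p * q * q ^ k / (p - 1)) q M *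
    qDescFactorial q (k + M) k * hsign

end Kravchuk

/-- q-Kravchuk moments: with
`ρ(s) = q^{s(N-1)/2 - binom(N,2)/2} [N]_q!/([s]_q! [N-s]_q!) p^s (1-p)^{N-s}`,
the `k`-th q-moment equals
`u_0^q (q^{-N};q)_k/[(1-q)^k (pq/(p-1);q)_k] (pq^{N+1}/(p-1))^k`, with
`u_0^q = (1-p)^N q^{-(binom(N,2)+1)/2} (pq/(p-1);q)_N`. -/
theorem qKravchuk_moments (q p : ℝ) (N : ℕ) (hq : 0 < q) (hq1 : q < 1)
    (hp : 0 < p) (hp1 : p < 1) (k : ℕ) :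
    ∑ s ∈ Finset.range (N + 1),
        qfall q s k *
          (q ^ ((s : ℝ) * ((N : ℝ) - 1) / 2 - (N.choose 2 : ℝ) / 2) *
            qfact q N / (qfact q s * qfact q (N - s)) * p ^ s * (1 - p) ^ (N - s)) *
          (qlat q ((s : ℝ) + 1 / 2) - qlat q ((s : ℝ) - 1 / 2)) =
      ((1 - p) ^ N * q ^ (-((N.choose 2 : ℝ) + 1) / 2) * qPoch (p * q / (p - 1)) q N) *
        qPoch (q ^ (-(N : ℝ))) q k / ((1 - q) ^ k * qPoch (p * q / (p - 1)) q k) *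
          (p * q ^ (N + 1) / (p - 1)) ^ k := by
  change ∑ s ∈ range (N + 1), qfall q s k * qKravchukWeight q p N s *
    (qlat q ((s : ℝ) + 1 / 2) - qlat q ((s : ℝ) - 1 / 2)) = _
  rcases lt_or_ge N k with hNk | hkN
  · rw [qPoch_rpow_neg_natCast_of_lt hq hNk, sum_eq_zero fun s hs ↦ by
      rw [qfall_natCast_of_lt (by have := mem_range.mp hs; omega), zero_mul, zero_mul]]
    simp
  · obtain ⟨M, rfl⟩ := Nat.exists_eq_add_of_le hkN
    rw [sum_qKravchuk_moment_eq_prod hq hq1.ne p k M,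
      qKravchuk_closed_form_eq_prod hq hq1.ne hp hp1 k M]
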